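/- arXiv:2407.10051 — 2 statements merged into one kernel-verified Lean document; each statement's English description precedes it below -/
import Mathlib

section
/- Let a be a nonzero element of the prime subfield F_p ⊆ F_q, let b ∈ F_q^*, and let v ∈ Γ satisfy Tr_{q/t}(bv) = 0. If Tr(v^{p^t−1}) ≠ 0, then N(a,b) = p^{2m−2} − 1 + p^{m−2}(p−1) − p^{m+t−2} − p^{m−2}·S. -/
/-!
Let `n = p^t` and `T = Tr`. Summing over `x` first gives `N(a,b) + 1 = p^(m-1) M` with
`M = #{y : z T(y^(n-1)) = T(by)}`. Multiplying `y` by `c ∈ E^*` (`E` the subfield of order `n`)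
leaves `y^(n-1)` unchanged, while `T(cby) = Tr_E(c Tr_{q/t}(by))` is equidistributed in `c` unless
`Tr_{q/t}(by) = 0`. As the kernel of `Tr_{q/t}` is the `E`-line through `bv`, this happens exactly
for `y ∈ E^* v`, where `T(y^(n-1)) = T(v^(n-1)) ≠ 0`. Averaging over the `E^*`-orbits expresses `M`
through the number `Z` of `x ∈ Δ` with `T x = 0`, since `y ↦ y^(n-1)` maps `F_q^*` onto `Δ` with
fibres of size `n - 1`; orthogonality of additive characters gives `S = pZ - (n + 1)`.
-/

open Finset

theorem sub_one_mul_add_one_eq_sq_sub_one (q : ℕ) : (q - 1) * (q + 1) = q ^ 2 - 1 := by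
  rw [sq, mul_comm, ← Nat.mul_self_sub_mul_self_eq, mul_one]

theorem card_filter_ne_and_add_one {α : Type*} [Fintype α] [DecidableEq α] {P : α → Prop}
    [DecidablePred P] {a : α} (ha : P a) : #{x | x ≠ a ∧ P x} + 1 = #{x | P x} := by
  rw [← card_erase_add_one (mem_filter.2 ⟨mem_univ a, ha⟩)]
  congr 2
  ext x
  simp

theorem AddMonoidHom.card_fiber_mul_card_of_surjective {G H : Type*} [AddGroup G] [AddGroup H]
    [Fintype G] [Fintype H] [DecidableEq H] {f : G →+ H} (hf : Function.Surjective f) (h : H) :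
    #{x | f x = h} * Fintype.card H = Fintype.card G := by
  have hfib : #{x | f x = h} = Nat.card f.ker := by
    rw [← Nat.card_congr (f.fiberEquivKerOfSurjective hf h)]
    change _ = Nat.card {x // f x = h}
    rw [Nat.card_eq_fintype_card, Fintype.card_subtype]
  rw [hfib, ← Nat.card_eq_fintype_card, ← Nat.card_eq_fintype_card, ← f.ker.card_mul_index,
    AddSubgroup.index_ker, AddMonoidHom.range_eq_top.2 hf, AddSubgroup.card_top]

theorem card_pow_eq_one_le {R : Type*} [CommRing R] [IsDomain R] [Fintype R] [DecidableEq R]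
    {d : ℕ} (hd : 0 < d) : #{x : R | x ^ d = 1} ≤ d := by
  refine (card_le_card fun x hx => ?_).trans
    ((Multiset.toFinset_card_le _).trans (Polynomial.card_nthRoots d 1))
  rw [← Polynomial.nthRootsFinset_def, Polynomial.mem_nthRootsFinset hd]
  exact (mem_filter.1 hx).2

theorem sum_ne_zero_sum_exp_pow_val {p : ℕ} [Fact p.Prime] {V : Type*} [AddCommGroup V]
    [Module (ZMod p) V] (Δ : Finset V) (f : V →ₗ[ZMod p] ZMod p) :
    ∑ u ∈ ({0}ᶜ : Finset (ZMod p)), ∑ x ∈ Δ,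
        Complex.exp (2 * Real.pi * Complex.I / p) ^ (f (u • x)).val
      = p * #{x ∈ Δ | f x = 0} - #Δ := by
  have hchar : ∀ j : ZMod p,
      Complex.exp (2 * Real.pi * Complex.I / p) ^ j.val = ZMod.stdAddChar j := by
    intro j
    rw [ZMod.stdAddChar_apply, ZMod.toCircle_apply, ← Complex.exp_nat_mul]
    ring_nf
  have hsum : ∀ c : ZMod p, ∑ u ∈ ({0}ᶜ : Finset (ZMod p)), ZMod.stdAddChar (u * c)
      = (if c = 0 then (p : ℂ) else 0) - 1 := by
    intro c
    have h := AddChar.sum_mulShift c (ZMod.isPrimitive_stdAddChar p)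
    rw [← sum_compl_add_sum {0}, sum_singleton, zero_mul, AddChar.map_zero_eq_one, ZMod.card]
      at h
    rw [eq_sub_iff_add_eq, h]
    split_ifs <;> simp
  simp only [map_smul, smul_eq_mul, hchar]
  rw [sum_comm]
  simp only [hsum, sum_sub_distrib, ← sum_filter, sum_const, nsmul_eq_mul, mul_one, mul_comm]

namespace FiniteField

theorem card_trace_eq {K L : Type*} [Field K] [Field L] [Fintype K] [Fintype L]
    [DecidableEq K] [Algebra K L] (s : K) :
    #{x : L | Algebra.trace K L x = s} = Fintype.card L / Fintype.card K :=
  (Nat.div_eq_of_eq_mul_left Fintype.card_pos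
    ((Algebra.trace K L).toAddMonoidHom.card_fiber_mul_card_of_surjective
      (Algebra.trace_surjective K L) s).symm).symm

theorem card_ne_zero_pow_eq_pow {K : Type*} [Field K] [Fintype K] [DecidableEq K] {d : ℕ}
    (hd : 0 < d) {y₀ : K} (hy₀ : y₀ ≠ 0) :
    #{y : K | y ≠ 0 ∧ y ^ d = y₀ ^ d} = #{c : K | c ^ d = 1} := by
  refine card_nbij' (· / y₀) (· * y₀) ?_ ?_ (fun y _ => div_mul_cancel₀ y hy₀)
    (fun c _ => mul_div_cancel_right₀ c hy₀)
  · intro y hy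
    simp only [coe_filter, mem_univ, true_and, Set.mem_ofPred_eq] at hy ⊢
    rw [div_pow, hy.2, div_self (pow_ne_zero _ hy₀)]
  · intro c hc
    simp only [coe_filter, mem_univ, true_and, Set.mem_ofPred_eq] at hc ⊢
    refine ⟨mul_ne_zero ?_ hy₀, by rw [mul_pow, hc, one_mul]⟩
    rintro rfl
    rw [zero_pow hd.ne'] at hc
    exact zero_ne_one hc

theorem sum_pow_eq_nsmul_sum_pow_eq_one {K M : Type*} [Field K] [Fintype K] [DecidableEq K]
    [AddCommMonoid M] {d e : ℕ} (hde : d * e = Fintype.card K - 1) (h : K → M) :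
    ∑ y ∈ {y : K | y ≠ 0}, h (y ^ d) = d • ∑ x ∈ {x : K | x ^ e = 1}, h x := by
  set units : Finset K := {y | y ≠ 0}
  set roots : Finset K := {c | c ^ d = 1}
  set rootsE : Finset K := {x | x ^ e = 1}
  set image := units.image (· ^ d)
  have hunits : #units = Fintype.card K - 1 := by simp [units, filter_ne']
  have hpos : 0 < d * e := hde ▸ Nat.sub_pos_of_lt Fintype.one_lt_card
  have hfib : ∀ w ∈ image, #{y ∈ units | y ^ d = w} = #roots := by
    simp only [image, mem_image]
    rintro w ⟨y₀, hy₀, rfl⟩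
    rw [filter_filter]
    exact card_ne_zero_pow_eq_pow (Nat.pos_of_mul_pos_right hpos) (mem_filter.1 hy₀).2
  have himage : image ⊆ rootsE := by
    simp only [image, rootsE, subset_iff, mem_image, mem_filter, mem_univ, true_and, units]
    rintro _ ⟨y, hy, rfl⟩
    rw [← pow_mul, hde, FiniteField.pow_card_sub_one_eq_one y hy]
  -- Both factors are bounded by root counts, so this product forces `#roots = d`, `#image = e`.
  have hcount : #image * #roots = e * d := by
    rw [mul_comm e, hde, ← hunits, card_eq_sum_card_image (· ^ d) units, sum_congr rfl hfib,
      sum_const, smul_eq_mul]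
  have hroots : #roots ≤ d := card_pow_eq_one_le (Nat.pos_of_mul_pos_right hpos)
  have hrootsE : #rootsE ≤ e := card_pow_eq_one_le (Nat.pos_of_mul_pos_left hpos)
  have hroots_eq : #roots = d := by
    refine hroots.antisymm (Nat.le_of_mul_le_mul_left ?_ (Nat.pos_of_mul_pos_left hpos))
    exact hcount.symm.trans_le (Nat.mul_le_mul_right _ ((card_le_card himage).trans hrootsE))
  have himage_eq : image = rootsE := by
    refine eq_of_subset_of_card_le himage (hrootsE.trans ?_)
    rw [hroots_eq] at hcount
    exact (Nat.eq_of_mul_eq_mul_right (Nat.pos_of_mul_pos_right hpos) hcount).ge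
  rw [sum_comp, himage_eq.symm, smul_sum]
  exact sum_congr rfl fun w hw => by rw [hfib w hw, hroots_eq]

theorem card_pow_eq_one_of_card_eq_sq {L : Type*} [Field L] [Fintype L] [DecidableEq L] {q : ℕ}
    (hL : Fintype.card L = q ^ 2) : #{x : L | x ^ (q + 1) = 1} = q + 1 := by
  have hq : 1 < q := (one_lt_pow_iff two_ne_zero).1 (hL ▸ Fintype.one_lt_card)
  have h := sum_pow_eq_nsmul_sum_pow_eq_one (K := L) (d := q - 1) (e := q + 1)
    (by rw [hL, sub_one_mul_add_one_eq_sq_sub_one]) (fun _ => 1)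
  simp only [sum_const, smul_eq_mul, mul_one, filter_ne', card_erase_of_mem (mem_univ _),
    card_univ, hL, ← sub_one_mul_add_one_eq_sq_sub_one] at h
  exact (Nat.eq_of_mul_eq_mul_left (by omega) h).symm

end FiniteField

theorem exists_smul_eq_of_trace_eq_zero {K L : Type*} [Field K] [Field L] [Fintype K]
    [Fintype L] [DecidableEq K] [Algebra K L]
    (hL : Fintype.card L = Fintype.card K ^ 2) {u w : L} (hu : u ≠ 0)
    (hu₀ : Algebra.trace K L u = 0) (hw : Algebra.trace K L w = 0) : ∃ c : K, c • u = w := by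
  classical
  set kernel : Finset L := {x | Algebra.trace K L x = 0}
  have hline : univ.image (fun c : K => c • u) ⊆ kernel := by
    simp only [kernel, subset_iff, mem_image, mem_univ, true_and, mem_filter]
    rintro _ ⟨c, rfl⟩
    rw [map_smul, hu₀, smul_zero]
  have hcard : #kernel ≤ #(univ.image (fun c : K => c • u)) := by
    rw [FiniteField.card_trace_eq, card_image_of_injective _ (smul_left_injective K hu), card_univ,
      hL, sq, Nat.mul_div_cancel _ Fintype.card_pos]
  have hw : w ∈ univ.image (fun c : K => c • u) := by
    rw [eq_of_subset_of_card_le hline hcard]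
    simpa [kernel] using hw
  simpa using hw

theorem card_trace_mul_ne_zero {K L : Type*} [Field K] [Field L] [Fintype K] [Fintype L]
    [DecidableEq K] [Algebra K L] (hL : Fintype.card L = Fintype.card K ^ 2) {b : L}
    (hb : b ≠ 0) :
    #{y : L | Algebra.trace K L (b * y) ≠ 0} = (Fintype.card K - 1) * Fintype.card K := by
  classical
  have hzero : #{y : L | Algebra.trace K L (b * y) = 0} = Fintype.card K := by
    rw [card_equiv (Equiv.mulLeft₀ b hb) (t := {u : L | Algebra.trace K L u = 0})
      (fun y => by simp), FiniteField.card_trace_eq, hL, sq, Nat.mul_div_cancel _ Fintype.card_pos]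
  rw [filter_not, card_sdiff_of_subset (filter_subset _ _), hzero, card_univ, hL,
    Nat.sub_mul, one_mul, sq]

theorem card_ne_zero_mul_card_filter {K L : Type*} [Field K] [Field L] [Fintype K] [Fintype L]
    [DecidableEq K] [DecidableEq L] [Algebra K L] (P : L → Prop) [DecidablePred P] :
    #{c : K | c ≠ 0} * #{y : L | y ≠ 0 ∧ P y}
      = ∑ y ∈ {y : L | y ≠ 0}, #{c : K | c ≠ 0 ∧ P (c • y)} := by
  have hshift : ∀ c ∈ ({c : K | c ≠ 0} : Finset K),
      #{y : L | y ≠ 0 ∧ P y} = #{y : L | y ≠ 0 ∧ P (c • y)} := by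
    intro c hc
    have hc : (algebraMap K L c) ≠ 0 := by simpa using (mem_filter.1 hc).2
    refine (card_equiv (Equiv.mulLeft₀ _ hc).symm fun y => ?_)
    simp [Algebra.smul_def, hc]
  rw [← smul_eq_mul, ← sum_const, sum_congr rfl hshift]
  simp only [← filter_filter]
  exact sum_card_bipartiteAbove_eq_sum_card_bipartiteBelow (fun c y => P (c • y))

theorem card_trace_eq_zero_and_trace_eq_zero {k L : Type*} [Field k] [Field L] [Fintype k]
    [Fintype L] [DecidableEq k] [Algebra k L] (φ : L → L) (z : k) (b : L) :
    #{xy : L × L | Algebra.trace k L (xy.1 + φ xy.2) = 0 ∧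
        Algebra.trace k L (algebraMap k L z * xy.1 + b * xy.2) = 0}
      = Fintype.card L / Fintype.card k
        * #{y : L | z * Algebra.trace k L (φ y) = Algebra.trace k L (b * y)} := by
  set T := Algebra.trace k L
  have hfiber : ∀ y : L, #{x : L | T (x + φ y) = 0 ∧ T (algebraMap k L z * x + b * y) = 0}
      = if z * T (φ y) = T (b * y) then Fintype.card L / Fintype.card k else 0 := by
    intro y
    have hcond : ∀ x : L, (T (x + φ y) = 0 ∧ T (algebraMap k L z * x + b * y) = 0) ↔
        (T x = -T (φ y) ∧ z * T (φ y) = T (b * y)) := by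
      intro x
      rw [map_add, map_add, ← Algebra.smul_def, map_smul, smul_eq_mul, add_eq_zero_iff_eq_neg,
        add_eq_zero_iff_eq_neg]
      constructor
      · rintro ⟨hx, hzx⟩
        exact ⟨hx, by rwa [hx, mul_neg, neg_inj] at hzx⟩
      · rintro ⟨hx, hzy⟩
        exact ⟨hx, by rw [hx, mul_neg, hzy]⟩
    simp only [hcond]
    split_ifs with h
    · simp only [h, and_true]
      exact FiniteField.card_trace_eq _
    · simp [h]
  rw [card_filter, Fintype.sum_prod_type, sum_comm]
  simp only [← card_filter, hfiber]
  rw [← sum_filter, sum_const, smul_eq_mul, mul_comm]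

section Tower

variable {k K L : Type*} [Field k] [Field K] [Field L] [Fintype K] [Fintype L]
  [Algebra k K] [Algebra k L] [Algebra K L] [IsScalarTower k K L]

theorem Algebra.trace_smul_eq_zero_of_trace_eq_zero {x : L} (hx : Algebra.trace K L x = 0)
    (c : K) : Algebra.trace k L (c • x) = 0 := by
  rw [← Algebra.trace_trace (S := K), map_smul, hx, smul_zero, map_zero]

theorem card_trace_smul_eq [Fintype k] [DecidableEq k] {x : L} (hx : Algebra.trace K L x ≠ 0)
    (s : k) : #{c : K | Algebra.trace k L (c • x) = s} = Fintype.card K / Fintype.card k := by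
  have htrace : ∀ c : K,
      Algebra.trace k L (c • x) = Algebra.trace k K (c * Algebra.trace K L x) :=
    fun c => by rw [← Algebra.trace_trace (S := K), map_smul, smul_eq_mul]
  rw [← FiniteField.card_trace_eq (L := K) s]
  refine card_equiv (Equiv.mulRight₀ _ hx) fun c => ?_
  simp only [mem_filter, mem_univ, true_and, htrace]
  rfl

theorem card_ne_zero_trace_smul_add_ite [Fintype k] [DecidableEq k] [DecidableEq K] {x : L}
    (hx : Algebra.trace K L x ≠ 0) (s : k) :
    #{c : K | c ≠ 0 ∧ Algebra.trace k L (c • x) = s} + (if s = 0 then 1 else 0)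
      = Fintype.card K / Fintype.card k := by
  rw [← card_trace_smul_eq hx s]
  split_ifs with hs
  · subst hs
    rw [← card_erase_add_one (s := {c : K | Algebra.trace k L (c • x) = 0}) (a := 0) (by simp)]
    congr 2
    ext c
    simp
  · rw [add_zero]
    congr 1
    ext c
    simp only [mem_filter, mem_univ, true_and, and_iff_right_iff_imp]
    rintro h rfl
    exact hs (by simpa using h.symm)

variable [Fintype k] [DecidableEq k] [DecidableEq K]

theorem card_ne_zero_smul_add_ite_eq (hL : Fintype.card L = Fintype.card K ^ 2) {z : k}
    (hz : z ≠ 0) {b v : L} (hb : b ≠ 0) (hbv : Algebra.trace K L (b * v) = 0)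
    (hv : Algebra.trace k L (v ^ (Fintype.card K - 1)) ≠ 0) {y : L} (hy : y ≠ 0) :
    #{c : K | c ≠ 0 ∧ z * Algebra.trace k L ((c • y) ^ (Fintype.card K - 1))
        = Algebra.trace k L (b * c • y)}
      + (if Algebra.trace k L (y ^ (Fintype.card K - 1)) = 0 then 1 else 0)
      = if Algebra.trace K L (b * y) = 0 then 0 else Fintype.card K / Fintype.card k := by
  set q := Fintype.card K
  set T := Algebra.trace k L
  have hq : 1 < q := Fintype.one_lt_card
  have hcond : ∀ c : K, (c ≠ 0 ∧ z * T ((c • y) ^ (q - 1)) = T (b * c • y)) ↔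
      (c ≠ 0 ∧ T (c • (b * y)) = z * T (y ^ (q - 1))) := by
    refine fun c => and_congr_right fun hc => ?_
    rw [smul_pow, FiniteField.pow_card_sub_one_eq_one c hc, one_smul, mul_smul_comm, eq_comm]
  simp only [hcond]
  by_cases h0 : Algebra.trace K L (b * y) = 0
  · have hv₀ : v ≠ 0 := by
      rintro rfl
      simp [T, zero_pow (by omega : q - 1 ≠ 0)] at hv
    obtain ⟨c, hc⟩ := exists_smul_eq_of_trace_eq_zero hL (mul_ne_zero hb hv₀) hbv h0
    have hyv : y = c • v := mul_left_cancel₀ hb (by rw [← hc, mul_smul_comm])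
    have hc₀ : c ≠ 0 := by
      rintro rfl
      exact hy (by simpa using hyv)
    have hyq : T (y ^ (q - 1)) = T (v ^ (q - 1)) := by
      rw [hyv, smul_pow, FiniteField.pow_card_sub_one_eq_one c hc₀, one_smul]
    rw [if_pos h0, hyq, if_neg hv, add_zero, card_eq_zero, filter_eq_empty_iff]
    rintro c' - ⟨-, hc'⟩
    rw [Algebra.trace_smul_eq_zero_of_trace_eq_zero h0] at hc'
    exact mul_ne_zero hz hv hc'.symm
  · rw [if_neg h0, ← card_ne_zero_trace_smul_add_ite h0 (z * T (y ^ (q - 1)))]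
    simp only [mul_eq_zero, hz, false_or]
    rfl

theorem card_add_card_pow_eq_one_trace_eq_zero [DecidableEq L]
    (hL : Fintype.card L = Fintype.card K ^ 2) {z : k} (hz : z ≠ 0) {b v : L} (hb : b ≠ 0)
    (hbv : Algebra.trace K L (b * v) = 0)
    (hv : Algebra.trace k L (v ^ (Fintype.card K - 1)) ≠ 0) :
    #{y : L | y ≠ 0 ∧ z * Algebra.trace k L (y ^ (Fintype.card K - 1))
        = Algebra.trace k L (b * y)}
      + #{x : L | x ^ (Fintype.card K + 1) = 1 ∧ Algebra.trace k L x = 0}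
      = Fintype.card K * (Fintype.card K / Fintype.card k) := by
  set q := Fintype.card K
  set T := Algebra.trace k L
  have hq : 1 < q := Fintype.one_lt_card
  have hunits : #{c : K | c ≠ 0} = q - 1 := by simp [filter_ne', q]
  have hpow : ∑ y ∈ {y : L | y ≠ 0}, (if T (y ^ (q - 1)) = 0 then 1 else 0)
      = (q - 1) * #{x : L | x ^ (q + 1) = 1 ∧ T x = 0} := by
    rw [FiniteField.sum_pow_eq_nsmul_sum_pow_eq_one (e := q + 1)
      (by rw [hL, sub_one_mul_add_one_eq_sq_sub_one]) (fun x => if T x = 0 then 1 else 0),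
      sum_boole, filter_filter, smul_eq_mul, Nat.cast_id]
  have hkernel : #{y : L | y ≠ 0 ∧ Algebra.trace K L (b * y) ≠ 0} = (q - 1) * q := by
    rw [← card_trace_mul_ne_zero hL hb]
    congr 1
    ext y
    simp only [mem_filter, mem_univ, true_and, and_iff_right_iff_imp]
    rintro h rfl
    simp at h
  have horbit := card_ne_zero_mul_card_filter (K := K) (fun y => z * T (y ^ (q - 1)) = T (b * y))
  rw [hunits] at horbit
  refine Nat.eq_of_mul_eq_mul_left (by omega : 0 < q - 1) ?_
  calc (q - 1) * (#{y : L | y ≠ 0 ∧ z * T (y ^ (q - 1)) = T (b * y)}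
        + #{x : L | x ^ (q + 1) = 1 ∧ T x = 0})
      = ∑ y ∈ {y : L | y ≠ 0}, (#{c : K | c ≠ 0 ∧ z * T ((c • y) ^ (q - 1)) = T (b * c • y)}
          + if T (y ^ (q - 1)) = 0 then 1 else 0) := by
        rw [sum_add_distrib, hpow, mul_add, horbit]
    _ = ∑ y ∈ {y : L | y ≠ 0}, if Algebra.trace K L (b * y) = 0 then 0 else q / Fintype.card k :=
        sum_congr rfl fun y hy =>
          card_ne_zero_smul_add_ite_eq hL hz hb hbv hv (mem_filter.1 hy).2
    _ = (q - 1) * (q * (q / Fintype.card k)) := by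
        rw [sum_ite, sum_const_zero, zero_add, sum_const, smul_eq_mul, filter_filter, hkernel,
          mul_assoc]

end Tower

theorem card_ne_zero_trace_pairs_eq {p s : ℕ} [Fact p.Prime] {K L : Type*} [Field K] [Field L]
    [Fintype K] [Fintype L] [DecidableEq K] [DecidableEq L] [Algebra K L] [Algebra (ZMod p) K]
    [Algebra (ZMod p) L] [IsScalarTower (ZMod p) K L] (hK : Fintype.card K = p ^ (s + 1))
    (hL : Fintype.card L = Fintype.card K ^ 2) {z : ZMod p} (hz : z ≠ 0) {b v : L} (hb : b ≠ 0)
    (hbv : Algebra.trace K L (b * v) = 0)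
    (hv : Algebra.trace (ZMod p) L (v ^ (p ^ (s + 1) - 1)) ≠ 0) :
    (#{xy : L × L | xy ≠ (0, 0) ∧
        Algebra.trace (ZMod p) L (xy.1 + xy.2 ^ (p ^ (s + 1) - 1)) = 0 ∧
        Algebra.trace (ZMod p) L (algebraMap (ZMod p) L z * xy.1 + b * xy.2) = 0} : ℂ)
      = (p : ℂ) ^ (4 * s + 2) - 1 + (p : ℂ) ^ (2 * s) * (p - 1) - (p : ℂ) ^ (3 * s + 1)
        - (p : ℂ) ^ (2 * s) * ∑ u ∈ ({0}ᶜ : Finset (ZMod p)),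
          ∑ x ∈ {x : L | x ^ (p ^ (s + 1) + 1) = 1},
            Complex.exp (2 * Real.pi * Complex.I / p) ^ (Algebra.trace (ZMod p) L (u • x)).val := by
  set T := Algebra.trace (ZMod p) L
  have hp : 1 < p := (Fact.out : p.Prime).one_lt
  have hpow : p ^ (s + 1) / p = p ^ s := by rw [pow_succ, Nat.mul_div_cancel _ (by omega)]
  have hzero : (0 : L) ^ (p ^ (s + 1) - 1) = 0 :=
    zero_pow (by have : 1 < p ^ (s + 1) := Nat.one_lt_pow (by omega) hp; omega)
  have hpairs : #{xy : L × L | xy ≠ (0, 0) ∧ T (xy.1 + xy.2 ^ (p ^ (s + 1) - 1)) = 0 ∧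
        T (algebraMap (ZMod p) L z * xy.1 + b * xy.2) = 0} + 1
      = p ^ (2 * s + 1)
        * (#{y : L | y ≠ 0 ∧ z * T (y ^ (p ^ (s + 1) - 1)) = T (b * y)} + 1) := by
    rw [card_filter_ne_and_add_one (by simp [hzero]),
      card_trace_eq_zero_and_trace_eq_zero (fun y : L => y ^ (p ^ (s + 1) - 1)),
      card_filter_ne_and_add_one (P := fun y : L => z * T (y ^ (p ^ (s + 1) - 1)) = T (b * y))
        (by simp [hzero]), hL, hK, ZMod.card, ← pow_mul, show (s + 1) * 2 = 2 * s + 1 + 1 by ring,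
      pow_succ, Nat.mul_div_cancel _ (by omega)]
  have hcount := card_add_card_pow_eq_one_trace_eq_zero hL hz hb hbv (hK ▸ hv)
  rw [hK, ZMod.card, hpow] at hcount
  have hpairsC := congrArg (Nat.cast : ℕ → ℂ) hpairs
  have hcountC := congrArg (Nat.cast : ℕ → ℂ) hcount
  push_cast at hpairsC hcountC
  rw [sum_ne_zero_sum_exp_pow_val, filter_filter,
    FiniteField.card_pow_eq_one_of_card_eq_sq (hK ▸ hL)]
  push_cast
  linear_combination hpairsC + (p : ℂ) ^ (2 * s + 1) * hcountC

theorem stmt6_general (p t m : ℕ) [Fact p.Prime] (hm : m = 2 * t)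
    (F : Type) [Field F] [Fintype F] [DecidableEq F] [Algebra (ZMod p) F]
    (hF : Fintype.card F = p ^ m)
    (E : Subfield F) (hE : Nat.card E = p ^ t)
    (ζ : ℂ) (hζ : ζ = Complex.exp (2 * Real.pi * Complex.I / p))
    (χ : F → ℂ) (hχ : ∀ x, χ x = ζ ^ (Algebra.trace (ZMod p) F x).val)
    (Δ : Finset F) (hΔ : Δ = univ.filter (fun x : F => x ^ (p ^ t + 1) = 1))
    (S : ℂ) (hS : S = ∑ z ∈ ({0}ᶜ : Finset (ZMod p)), ∑ x ∈ Δ, χ (algebraMap (ZMod p) F z * x))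
    (N : F → F → ℕ)
    (hN : ∀ a b : F, N a b = Set.ncard {xy : F × F | xy ≠ (0, 0) ∧
      Algebra.trace (ZMod p) F (xy.1 + xy.2 ^ (p ^ t - 1)) = 0 ∧
      Algebra.trace (ZMod p) F (a * xy.1 + b * xy.2) = 0})
    (z : ZMod p) (hz : z ≠ 0) (a : F) (ha : a = algebraMap (ZMod p) F z)
    (b : F) (hb : b ≠ 0)
    (v : F) (hbv : Algebra.trace E F (b * v) = 0)
    (htr : Algebra.trace (ZMod p) F (v ^ (p ^ t - 1)) ≠ 0) :
    (N a b : ℂ) = (p : ℂ) ^ (2 * m - 2) - 1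
      + (p : ℂ) ^ (m - 2) * (p - 1) - (p : ℂ) ^ (m + t - 2)
      - (p : ℂ) ^ (m - 2) * S := by
  let : Fintype E := Fintype.ofFinite E
  have : CharP F p := charP_of_injective_algebraMap (algebraMap (ZMod p) F).injective p
  let : Algebra (ZMod p) E := ZMod.algebra E p
  -- The default `ZMod p`-action on `E` is the additive-group one, not the algebra's.
  have : @IsScalarTower (ZMod p) E F Algebra.toSMul Algebra.toSMul Algebra.toSMul :=
    IsScalarTower.of_algebraMap_eq' (Subsingleton.elim _ _)
  have hEcard : Fintype.card E = p ^ t := by rw [← Nat.card_eq_fintype_card, hE]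
  have hFE : Fintype.card F = Fintype.card E ^ 2 := by rw [hF, hEcard, hm, ← pow_mul, mul_comm]
  obtain ⟨s, rfl⟩ : ∃ s, t = s + 1 := Nat.exists_eq_add_one.2 <| Nat.pos_of_ne_zero <| by
    rintro rfl
    simpa [hEcard] using (Fintype.one_lt_card : 1 < Fintype.card E)
  subst hm hζ hS hΔ
  simp only [hχ, ← Algebra.smul_def]
  subst ha
  rw [hN, Set.ncard_eq_toFinset_card', Set.toFinset_ofPred,
    show 2 * (2 * (s + 1)) - 2 = 4 * s + 2 by omega, show 2 * (s + 1) - 2 = 2 * s by omega,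
    show 2 * (s + 1) + (s + 1) - 2 = 3 * s + 1 by omega]
  exact card_ne_zero_trace_pairs_eq hEcard hFE hz hb hbv htr

/-- **Statement 5.** For `a` a nonzero element of the prime subfield, `b ∈ F_q^*`, and
`v ∈ Γ` with `Tr_{q/t}(bv) = 0`: if `Tr(v^{p^t-1}) ≠ 0` then
`N(a,b) = p^{2m-2} - 1 + p^{m-2}(p-1) - p^{m+t-2} - p^{m-2}·S`. -/
theorem stmt6 (p t m : ℕ) [Fact p.Prime] (ht : 2 < t) (hm : m = 2 * t)
    (F : Type) [Field F] [Fintype F] [DecidableEq F] [Algebra (ZMod p) F]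
    (hF : Fintype.card F = p ^ m)
    (E : Subfield F) (hE : Nat.card E = p ^ t)
    (α : Fˣ) (hα : ∀ x : Fˣ, x ∈ Subgroup.zpowers α)
    (Γ : Set F) (hΓ : Γ = {v : F | ∃ j ≤ p ^ t, v = (α : F) ^ j})
    (ζ : ℂ) (hζ : ζ = Complex.exp (2 * Real.pi * Complex.I / p))
    (χ : F → ℂ) (hχ : ∀ x, χ x = ζ ^ (Algebra.trace (ZMod p) F x).val)
    (Δ : Finset F) (hΔ : Δ = univ.filter (fun x : F => x ^ (p ^ t + 1) = 1))
    (S : ℂ) (hS : S = ∑ z ∈ ({0}ᶜ : Finset (ZMod p)), ∑ x ∈ Δ, χ (algebraMap (ZMod p) F z * x))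
    (N : F → F → ℕ)
    (hN : ∀ a b : F, N a b = Set.ncard {xy : F × F | xy ≠ (0, 0) ∧
      Algebra.trace (ZMod p) F (xy.1 + xy.2 ^ (p ^ t - 1)) = 0 ∧
      Algebra.trace (ZMod p) F (a * xy.1 + b * xy.2) = 0})
    (z : ZMod p) (hz : z ≠ 0) (a : F) (ha : a = algebraMap (ZMod p) F z)
    (b : F) (hb : b ≠ 0)
    (v : F) (hv : v ∈ Γ) (hbv : Algebra.trace E F (b * v) = 0)
    (htr : Algebra.trace (ZMod p) F (v ^ (p ^ t - 1)) ≠ 0) :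
    (N a b : ℂ) = (p : ℂ) ^ (2 * m - 2) - 1
      + (p : ℂ) ^ (m - 2) * (p - 1) - (p : ℂ) ^ (m + t - 2)
      - (p : ℂ) ^ (m - 2) * S :=
  stmt6_general p t m hm F hF E hE ζ hζ χ hχ Δ hΔ S hS N hN z hz a ha b hb v hbv htr
end

section
/- Let T ⊆ F_q be an F_p-subspace with T ∩ F_p = {0} and |T| = p^r for some 1 ≤ r ≤ m−1. Then every pair (a,b) ∈ T × F_q with (a,b) ≠ (0,0) satisfies wt(a,b) = p^{2m−2}(p−1), and the F_p-linear map sending (a,b) ∈ T × F_q to the word (Tr(ax+by))_{(x,y)∈D} is injective; hence C_{D1} = {(Tr(ax+by))_{(x,y)∈D} : a ∈ T, b ∈ F_q} is a one-weight linear code of length p^{2m−1} − 1 and dimension m + r over F_p. -/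
/-!
Write `q = |L|`, `k = |K|` and `Tr` for the trace of a finite extension `L/K`. For fixed `y`, the
condition `Tr (x + g y) = 0` is one affine trace condition on `x`, so `D ∪ {0}` has `q²/k` points
whatever `g` is. The zeros of the codeword of `(a, b)` in `D ∪ {0}` are cut out by the additional
condition `Tr (a x + b y) = 0`. If `a ∉ K`, then `1` and `a` are `K`-independent, so by
nondegeneracy of the trace form `x ↦ (Tr x, Tr (a x))` is onto `K²` and each `y` contributes
`q/k²` values of `x`; if `a = 0 ≠ b`, then `q/k` values of `y` contribute `q/k` each. Either way
there are `q²/k²` zeros, so every nonzero codeword has weight `q²/k - q²/k² > 0`, and the encoding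
is injective.
-/

open Finset

theorem AddMonoidHom.card_mul_card_fiber_of_surjective {G M F : Type*} [AddGroup G] [Fintype G]
    [AddMonoid M] [Fintype M] [DecidableEq M] [FunLike F G M] [AddMonoidHomClass F G M]
    (f : F) (hf : Function.Surjective f) (c : M) :
    Fintype.card M * #{g | f g = c} = Fintype.card G := by
  calc Fintype.card M * #{g | f g = c} = ∑ m, #{g | f g = m} := by
        simp [sum_congr rfl fun m _ => card_fiber_eq_of_mem_range f (hf m) (hf c)]
    _ = Fintype.card G := (card_eq_sum_card_fiberwise (by simp)).symm

theorem Finset.card_filter_prod_eq_sum {α β : Type*} [Fintype α] [Fintype β] (P : α × β → Prop)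
    [DecidablePred P] : #{xy | P xy} = ∑ y, #{x | P (x, y)} := by
  simp only [card_filter]
  exact Fintype.sum_prod_type_right _

namespace Algebra

theorem injective_trace_codeword {K L : Type*} [CommRing K] [CommRing L] [Algebra K L]
    {D : Finset (L × L)} {T : Submodule K L}
    (hD : ∀ a ∈ T, ∀ b : L, (a, b) ≠ (0, 0) → ∃ xy ∈ D, trace K L (a * xy.1 + b * xy.2) ≠ 0) :
    Function.Injective fun ab : T × L => fun xy : D =>
      trace K L ((ab.1 : L) * (xy : L × L).1 + ab.2 * (xy : L × L).2) := by
  rintro ⟨a₁, b₁⟩ ⟨a₂, b₂⟩ h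
  by_contra hne
  obtain ⟨xy, hxy, hne0⟩ := hD (a₁ - a₂) (sub_mem a₁.2 a₂.2) (b₁ - b₂) fun h0 => by
      simp only [Prod.mk.injEq, sub_eq_zero] at h0
      exact hne (Prod.ext (Subtype.ext h0.1) h0.2)
  have hcodeword := congrFun h ⟨xy, hxy⟩
  dsimp only at hcodeword
  rw [sub_mul, sub_mul, ← add_sub_add_comm, map_sub, hcodeword, sub_self] at hne0
  exact hne0 rfl

section Separable

variable {K L : Type*} [Field K] [Field L] [Algebra K L] [FiniteDimensional K L]
  [Algebra.IsSeparable K L]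

theorem exists_trace_eq_zero_and_trace_mul_ne_zero {a : L}
    (ha : a ∉ Set.range (algebraMap K L)) : ∃ x, trace K L x = 0 ∧ trace K L (a * x) ≠ 0 := by
  obtain ⟨x₁, hx₁⟩ := trace_surjective K L 1
  by_contra! h
  -- otherwise `Tr (a x) = Tr (a x₁) Tr x`, as `x - Tr x • x₁` has trace zero
  have horth : ∀ x, trace K L ((a - algebraMap K L (trace K L (a * x₁))) * x) = 0 := by
    intro x
    have hx := h (x - trace K L x • x₁) (by simp [hx₁])
    rw [mul_sub, mul_smul_comm, map_sub, map_smul, sub_eq_zero] at hx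
    rw [sub_mul, map_sub, ← smul_def, map_smul, hx, smul_eq_mul, smul_eq_mul, mul_comm, sub_self]
  have h0 := (traceForm_nondegenerate K L).1 _ fun x => by simpa using horth x
  exact ha ⟨_, (sub_eq_zero.1 h0).symm⟩

theorem trace_prod_trace_mul_surjective {a : L} (ha : a ∉ Set.range (algebraMap K L)) :
    Function.Surjective fun x => (trace K L x, trace K L (a * x)) := by
  obtain ⟨x₁, hx₁⟩ := trace_surjective K L 1
  obtain ⟨x₂, hx₂, hax₂⟩ := exists_trace_eq_zero_and_trace_mul_ne_zero ha
  rintro ⟨u, v⟩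
  refine ⟨u • x₁ + ((v - u * trace K L (a * x₁)) / trace K L (a * x₂)) • x₂, ?_⟩
  simp [mul_add, hx₁, hx₂, div_mul_cancel₀ _ hax₂]

end Separable

section Finite

variable {K L : Type*} [Field K] [Field L] [Algebra K L] [Fintype K] [DecidableEq K] [Fintype L]

theorem card_mul_card_trace_eq (c : K) :
    Fintype.card K * #{x : L | trace K L x = c} = Fintype.card L :=
  AddMonoidHom.card_mul_card_fiber_of_surjective _ (trace_surjective K L) c

theorem card_mul_card_trace_mul_eq {b : L} (hb : b ≠ 0) (c : K) :
    Fintype.card K * #{y : L | trace K L (b * y) = c} = Fintype.card L := by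
  have hsurj : Function.Surjective (traceForm K L b) := fun c => by
    obtain ⟨x, rfl⟩ := trace_surjective K L c
    exact ⟨b⁻¹ * x, by rw [traceForm_apply, mul_inv_cancel_left₀ hb]⟩
  convert AddMonoidHom.card_mul_card_fiber_of_surjective _ hsurj c using 4
  simp

theorem card_sq_mul_card_trace_eq_and_trace_mul_eq {a : L}
    (ha : a ∉ Set.range (algebraMap K L)) (c₁ c₂ : K) :
    Fintype.card K ^ 2 * #{x : L | trace K L x = c₁ ∧ trace K L (a * x) = c₂} =
      Fintype.card L := by
  let f : L →+ K × K :=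
    AddMonoidHom.mk' (fun x => (trace K L x, trace K L (a * x))) fun x y => by simp [mul_add]
  simpa [f, sq, Prod.ext_iff] using
    AddMonoidHom.card_mul_card_fiber_of_surjective f (trace_prod_trace_mul_surjective ha) (c₁, c₂)

theorem card_mul_card_trace_add_eq_zero (g : L → L) :
    Fintype.card K * #{xy : L × L | trace K L (xy.1 + g xy.2) = 0} = Fintype.card L ^ 2 := by
  rw [card_filter_prod_eq_sum, mul_sum]
  calc ∑ y, Fintype.card K * #{x : L | trace K L (x + g y) = 0} = ∑ _y : L, Fintype.card L := by
        refine sum_congr rfl fun y _ => ?_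
        simp only [map_add, add_eq_zero_iff_eq_neg, card_mul_card_trace_eq]
    _ = Fintype.card L ^ 2 := by simp [sq]

theorem card_sq_mul_card_trace_add_eq_zero_and_trace_eq_zero (g : L → L) {a b : L}
    (ha : a ∈ Set.range (algebraMap K L) → a = 0) (hab : (a, b) ≠ (0, 0)) :
    Fintype.card K ^ 2 *
      #{xy : L × L | trace K L (xy.1 + g xy.2) = 0 ∧ trace K L (a * xy.1 + b * xy.2) = 0} =
      Fintype.card L ^ 2 := by
  rw [card_filter_prod_eq_sum, mul_sum]
  by_cases ha0 : a = 0
  · subst ha0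
    have hb : b ≠ 0 := fun hb => hab (by rw [hb])
    calc ∑ y, Fintype.card K ^ 2 *
          #{x : L | trace K L (x + g y) = 0 ∧ trace K L (0 * x + b * y) = 0}
        = ∑ y, Fintype.card K * if trace K L (b * y) = 0 then Fintype.card L else 0 := by
          refine sum_congr rfl fun y _ => ?_
          split_ifs with hy
          · simp only [zero_mul, zero_add, hy, and_true, map_add, add_eq_zero_iff_eq_neg]
            rw [sq, mul_assoc, card_mul_card_trace_eq]
          · simp [hy]
      _ = Fintype.card K * #{y : L | trace K L (b * y) = 0} * Fintype.card L := by
          rw [← mul_sum, ← sum_filter, sum_const, smul_eq_mul, mul_assoc]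
      _ = Fintype.card L ^ 2 := by rw [card_mul_card_trace_mul_eq hb, sq]
  · have ha' : a ∉ Set.range (algebraMap K L) := fun h => ha0 (ha h)
    calc ∑ y, Fintype.card K ^ 2 *
          #{x : L | trace K L (x + g y) = 0 ∧ trace K L (a * x + b * y) = 0}
        = ∑ _y : L, Fintype.card L := by
          refine sum_congr rfl fun y _ => ?_
          simp only [map_add, add_eq_zero_iff_eq_neg,
            card_sq_mul_card_trace_eq_and_trace_mul_eq ha']
      _ = Fintype.card L ^ 2 := by simp [sq]

variable [DecidableEq L]

theorem card_mul_card_ne_zero_and_trace_add_eq_zero_add_one (g : L → L)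
    (hg : trace K L (g 0) = 0) :
    Fintype.card K * (#{xy : L × L | xy ≠ (0, 0) ∧ trace K L (xy.1 + g xy.2) = 0} + 1) =
      Fintype.card L ^ 2 := by
  have herase : #{xy : L × L | xy ≠ (0, 0) ∧ trace K L (xy.1 + g xy.2) = 0} =
      #(({xy | trace K L (xy.1 + g xy.2) = 0} : Finset (L × L)).erase (0, 0)) := by
    congr 1; ext; simp
  rw [herase, card_erase_add_one (by simpa using hg), card_mul_card_trace_add_eq_zero]

theorem card_sq_mul_card_filter_trace_ne_zero (g : L → L) {a b : L}
    (ha : a ∈ Set.range (algebraMap K L) → a = 0) (hab : (a, b) ≠ (0, 0)) :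
    Fintype.card K ^ 2 *
      #{xy ∈ {xy : L × L | xy ≠ (0, 0) ∧ trace K L (xy.1 + g xy.2) = 0} |
        trace K L (a * xy.1 + b * xy.2) ≠ 0} =
      Fintype.card L ^ 2 * (Fintype.card K - 1) := by
  have hzero_excluded : #{xy ∈ {xy : L × L | xy ≠ (0, 0) ∧ trace K L (xy.1 + g xy.2) = 0} |
      trace K L (a * xy.1 + b * xy.2) ≠ 0} =
      #{xy ∈ {xy : L × L | trace K L (xy.1 + g xy.2) = 0} |
        trace K L (a * xy.1 + b * xy.2) ≠ 0} := by
    congr 1; ext xy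
    simp only [mem_filter, mem_univ, true_and, and_congr_left_iff]
    exact fun hxy => ⟨And.right, fun h => ⟨by rintro rfl; simp at hxy, h⟩⟩
  have hsplit := card_filter_add_card_filter_not
    (s := ({xy | trace K L (xy.1 + g xy.2) = 0} : Finset (L × L)))
    (p := fun xy => trace K L (a * xy.1 + b * xy.2) = 0)
  rw [filter_filter] at hsplit
  have hZ := card_sq_mul_card_trace_add_eq_zero_and_trace_eq_zero g ha hab
  have hS := card_mul_card_trace_add_eq_zero (K := K) g
  have hk : 1 ≤ Fintype.card K := Fintype.card_pos
  rw [hzero_excluded]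
  zify [hk] at hsplit hS hZ ⊢
  linear_combination (Fintype.card K : ℤ) ^ 2 * hsplit + Fintype.card K * hS - hZ

end Finite

end Algebra

theorem stmt14_general (p t m : ℕ) [Fact p.Prime] (ht : 2 < t)
    (F : Type) [Field F] [Fintype F] [DecidableEq F] [Algebra (ZMod p) F]
    (hF : Fintype.card F = p ^ m)
    (T : Submodule (ZMod p) F)
    (hT0 : ∀ x ∈ T, x ∈ Set.range (algebraMap (ZMod p) F) → x = 0)
    (D : Finset (F × F))
    (hD : D = univ.filter (fun xy : F × F => xy ≠ (0, 0) ∧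
      Algebra.trace (ZMod p) F (xy.1 + xy.2 ^ (p ^ t - 1)) = 0))
    (wt : F → F → ℕ)
    (hwt : ∀ a b : F, wt a b =
      (D.filter (fun xy : F × F => Algebra.trace (ZMod p) F (a * xy.1 + b * xy.2) ≠ 0)).card) :
    (∀ a ∈ T, ∀ b : F, (a, b) ≠ (0, 0) → wt a b = p ^ (2 * m - 2) * (p - 1)) ∧
      (Function.Injective (fun ab : T × F => fun xy : ↥D =>
        Algebra.trace (ZMod p) F ((ab.1 : F) * (xy : F × F).1 + ab.2 * (xy : F × F).2))) ∧
      D.card = p ^ (2 * m - 1) - 1 := by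
  subst hD
  have hp : 1 < p := (Fact.out : p.Prime).one_lt
  have hm : m ≠ 0 := by
    rintro rfl
    simpa [hF] using Fintype.one_lt_card (α := F)
  have hq : Fintype.card F ^ 2 = p * p ^ (2 * m - 1) := by
    rw [hF, ← pow_mul, ← pow_succ']; congr 1; omega
  have hweight : ∀ a ∈ T, ∀ b : F, (a, b) ≠ (0, 0) → wt a b = p ^ (2 * m - 2) * (p - 1) := by
    intro a haT b hab
    have h := Algebra.card_sq_mul_card_filter_trace_ne_zero (K := ZMod p) (· ^ (p ^ t - 1))
      (hT0 a haT) hab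
    rw [ZMod.card, hF, ← pow_mul, show m * 2 = 2 + (2 * m - 2) by omega, pow_add, mul_assoc] at h
    rw [hwt]
    exact Nat.eq_of_mul_eq_mul_left (by positivity) h
  refine ⟨hweight, Algebra.injective_trace_codeword fun a ha b hab => ?_, ?_⟩
  · have hpos : 0 < wt a b := by
      rw [hweight a ha b hab]; exact Nat.mul_pos (by positivity) (by omega)
    rw [hwt] at hpos
    exact filter_nonempty_iff.1 (card_pos.1 hpos)
  · have h := Algebra.card_mul_card_ne_zero_and_trace_add_eq_zero_add_one (K := ZMod p) (L := F)
      (· ^ (p ^ t - 1)) (by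
        rw [zero_pow (Nat.sub_ne_zero_of_lt (Nat.one_lt_pow (by omega) hp)), map_zero])
    rw [ZMod.card, hq] at h
    have hcard := Nat.eq_of_mul_eq_mul_left (by omega) h
    omega

/-- Let `T ⊆ F_q` be an `F_p`-subspace with `T ∩ F_p = {0}` and
`|T| = p^r`, `1 ≤ r ≤ m-1`. Then every `(a,b) ∈ T × F_q` with `(a,b) ≠ (0,0)` satisfies
`wt(a,b) = p^{2m-2}(p-1)`, and the map `(a,b) ↦ (Tr(ax+by))_{(x,y)∈D}` is injective;
hence `C_{D1}` is a one-weight linear code of length `p^{2m-1}-1` and dimension `m+r`. -/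
theorem stmt14 (p t m r : ℕ) [Fact p.Prime] (ht : 2 < t) (hm : m = 2 * t)
    (hr1 : 1 ≤ r) (hr2 : r ≤ m - 1)
    (F : Type) [Field F] [Fintype F] [DecidableEq F] [Algebra (ZMod p) F]
    (hF : Fintype.card F = p ^ m)
    (T : Submodule (ZMod p) F)
    (hT0 : ∀ x ∈ T, x ∈ Set.range (algebraMap (ZMod p) F) → x = 0)
    (hTcard : Nat.card T = p ^ r)
    (D : Finset (F × F))
    (hD : D = univ.filter (fun xy : F × F => xy ≠ (0, 0) ∧
      Algebra.trace (ZMod p) F (xy.1 + xy.2 ^ (p ^ t - 1)) = 0))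
    (wt : F → F → ℕ)
    (hwt : ∀ a b : F, wt a b =
      (D.filter (fun xy : F × F => Algebra.trace (ZMod p) F (a * xy.1 + b * xy.2) ≠ 0)).card) :
    (∀ a ∈ T, ∀ b : F, (a, b) ≠ (0, 0) → wt a b = p ^ (2 * m - 2) * (p - 1)) ∧
      (Function.Injective (fun ab : T × F => fun xy : ↥D =>
        Algebra.trace (ZMod p) F ((ab.1 : F) * (xy : F × F).1 + ab.2 * (xy : F × F).2))) ∧
      D.card = p ^ (2 * m - 1) - 1 :=
  stmt14_general p t m ht F hF T hT0 D hD wt hwt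
end
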